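/- arXiv:0812.3692 — 2 statements merged into one kernel-verified Lean document; each statement's English description precedes it below -/
import Mathlib

section
/- Let f : ℝ⁴ \ {0} → ℝ be a smooth function homogeneous of degree −2 (i.e. f(tv) = t⁻²f(v) for all t ≠ 0). Define φ on the set of pairs of linearly independent vectors (u, v) in ℝ⁴ by φ(u, v) = ∫₀^{2π} f(u cos θ + v sin θ) dθ. Then φ satisfies φ(au + bv, cu + dv) = |ad − bc|⁻¹ φ(u, v) for every invertible real 2×2 matrix (a b; c d); in particular φ descends, up to the density twist, to the Grassmannian of 2-planes in ℝ⁴. -/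
open Real intervalIntegral

private noncomputable def pf (a c θ : ℝ) : ℝ := a * Real.cos θ + c * Real.sin θ

private noncomputable def Rf (a b c d θ : ℝ) : ℝ := pf a c θ ^ 2 + pf b d θ ^ 2

private lemma continuous_pf (a c : ℝ) : Continuous (pf a c) := by
  unfold pf; fun_prop

private lemma continuous_Rf (a b c d : ℝ) : Continuous (Rf a b c d) := by
  unfold Rf pf; fun_prop

private lemma hasDerivAt_pf (a c θ : ℝ) : HasDerivAt (pf a c) (pf c (-a) θ) θ := by
  have h := ((Real.hasDerivAt_cos θ).const_mul a).add ((Real.hasDerivAt_sin θ).const_mul c)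
  refine h.congr_deriv ?_
  simp [pf]; ring

private lemma Rf_pos {a b c d : ℝ} (hD : a * d - b * c ≠ 0) (θ : ℝ) : 0 < Rf a b c d θ := by
  by_contra h
  push_neg at h
  unfold Rf at h
  have hp : pf a c θ = 0 := by nlinarith [sq_nonneg (pf a c θ), sq_nonneg (pf b d θ)]
  have hq : pf b d θ = 0 := by nlinarith [sq_nonneg (pf a c θ), sq_nonneg (pf b d θ)]
  have h1 : (a * d - b * c) * Real.cos θ = 0 := by
    have : d * pf a c θ - c * pf b d θ = (a * d - b * c) * Real.cos θ := by simp [pf]; ring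
    rw [hp, hq] at this; linarith [this]
  have h2 : (a * d - b * c) * Real.sin θ = 0 := by
    have : a * pf b d θ - b * pf a c θ = (a * d - b * c) * Real.sin θ := by simp [pf]; ring
    rw [hp, hq] at this; linarith [this]
  have hc : Real.cos θ = 0 := by
    rcases mul_eq_zero.mp h1 with h | h
    · exact absurd h hD
    · exact h
  have hs : Real.sin θ = 0 := by
    rcases mul_eq_zero.mp h2 with h | h
    · exact absurd h hD
    · exact h
  nlinarith [Real.sin_sq_add_cos_sq θ]

/-- Wronskian identity. -/
private lemma wronskian (a b c d θ : ℝ) :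
    pf a c θ * pf d (-b) θ - pf c (-a) θ * pf b d θ = a * d - b * c := by
  simp only [pf]
  linear_combination (a * d - b * c) * Real.sin_sq_add_cos_sq θ

private lemma exists_psi (a b c d : ℝ) (hD : 0 < a * d - b * c) :
    ∃ ψ : ℝ → ℝ,
      (∀ θ, HasDerivAt ψ ((a * d - b * c) / Rf a b c d θ) θ) ∧
      (∀ θ, pf a c θ = Real.sqrt (Rf a b c d θ) * Real.cos (ψ θ) ∧
            pf b d θ = Real.sqrt (Rf a b c d θ) * Real.sin (ψ θ)) ∧
      ψ (2 * π) = ψ 0 + 2 * π := by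
  have hDne : a * d - b * c ≠ 0 := ne_of_gt hD
  have hRne : ∀ θ, Rf a b c d θ ≠ 0 := fun θ => (Rf_pos hDne θ).ne'
  have hab : ¬(a = 0 ∧ b = 0) := by
    rintro ⟨ha, hb⟩; rw [ha, hb] at hDne; simp at hDne
  have hab2 : 0 < a ^ 2 + b ^ 2 := by
    rcases not_and_or.mp hab with h | h <;> positivity
  set r0 : ℝ := Real.sqrt (a ^ 2 + b ^ 2) with hr0def
  have hr0 : 0 < r0 := Real.sqrt_pos.mpr hab2
  have hr0sq : r0 ^ 2 = a ^ 2 + b ^ 2 := Real.sq_sqrt hab2.le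
  set z : ℂ := (a : ℂ) + (b : ℂ) * Complex.I with hzdef
  have hz : z ≠ 0 := by
    simp only [hzdef]
    intro h
    rw [Complex.ext_iff] at h
    simp at h
    exact hab ⟨h.1, h.2⟩
  have habs : ‖z‖ = r0 := by
    rw [hzdef, Complex.norm_add_mul_I, hr0def]
  set θ₀ : ℝ := z.arg with hθ₀def
  have hcos0 : Real.cos θ₀ = a / r0 := by
    rw [hθ₀def, Complex.cos_arg hz, habs]; simp [hzdef]
  have hsin0 : Real.sin θ₀ = b / r0 := by
    rw [hθ₀def, Complex.sin_arg, habs]; simp [hzdef]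
  -- the angle function
  have hWcont : Continuous (fun θ => (a * d - b * c) / Rf a b c d θ) :=
    continuous_const.div (continuous_Rf a b c d) hRne
  set ψ : ℝ → ℝ := fun θ => θ₀ + ∫ s in (0:ℝ)..θ, (a * d - b * c) / Rf a b c d s with hψdef
  have hψ : ∀ θ, HasDerivAt ψ ((a * d - b * c) / Rf a b c d θ) θ := by
    intro θ
    exact ((hWcont.integral_hasStrictDerivAt 0 θ).hasDerivAt).const_add θ₀
  have hψ0 : ψ 0 = θ₀ := by simp [hψdef]
  -- the integrating factor
  set ρ : ℝ → ℝ := fun θ =>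
    (pf a c θ * pf c (-a) θ + pf b d θ * pf d (-b) θ) / Rf a b c d θ with hρdef
  have hρcont : Continuous ρ := by
    apply Continuous.div _ (continuous_Rf a b c d) hRne
    exact ((continuous_pf a c).mul (continuous_pf c (-a))).add
      ((continuous_pf b d).mul (continuous_pf d (-b)))
  set P : ℝ → ℝ := fun θ => ∫ s in (0:ℝ)..θ, ρ s with hPdef
  have hP : ∀ θ, HasDerivAt P (ρ θ) θ := fun θ =>
    (hρcont.integral_hasStrictDerivAt 0 θ).hasDerivAt
  have hP0 : P 0 = 0 := by simp [hPdef]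
  -- A and B
  set A : ℝ → ℝ := fun θ => pf a c θ * Real.cos (ψ θ) + pf b d θ * Real.sin (ψ θ) with hAdef
  set B : ℝ → ℝ := fun θ => pf a c θ * Real.sin (ψ θ) - pf b d θ * Real.cos (ψ θ) with hBdef
  have hA' : ∀ θ, HasDerivAt A (ρ θ * A θ) θ := by
    intro θ
    have h1 := (hasDerivAt_pf a c θ).mul ((Real.hasDerivAt_cos (ψ θ)).comp θ (hψ θ))
    have h2 := (hasDerivAt_pf b d θ).mul ((Real.hasDerivAt_sin (ψ θ)).comp θ (hψ θ))
    have h := h1.add h2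
    refine h.congr_deriv ?_
    symm
    have hW := wronskian a b c d θ
    have hR : Rf a b c d θ = pf a c θ ^ 2 + pf b d θ ^ 2 := rfl
    simp only [hρdef, hAdef, Function.comp]
    have hne := hRne θ
    rw [hR] at hne ⊢
    generalize pf a c θ = p at *
    generalize pf b d θ = q at *
    generalize pf c (-a) θ = p' at *
    generalize pf d (-b) θ = q' at *
    generalize Real.cos (ψ θ) = cc at *
    generalize Real.sin (ψ θ) = ss at *
    field_simp
    linear_combination (q * cc - p * ss) * hW
  have hB' : ∀ θ, HasDerivAt B (ρ θ * B θ) θ := by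
    intro θ
    have h1 := (hasDerivAt_pf a c θ).mul ((Real.hasDerivAt_sin (ψ θ)).comp θ (hψ θ))
    have h2 := (hasDerivAt_pf b d θ).mul ((Real.hasDerivAt_cos (ψ θ)).comp θ (hψ θ))
    have h := h1.sub h2
    refine h.congr_deriv ?_
    symm
    have hW := wronskian a b c d θ
    have hR : Rf a b c d θ = pf a c θ ^ 2 + pf b d θ ^ 2 := rfl
    simp only [hρdef, hBdef, Function.comp]
    have hne := hRne θ
    rw [hR] at hne ⊢
    generalize pf a c θ = p at *
    generalize pf b d θ = q at *
    generalize pf c (-a) θ = p' at *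
    generalize pf d (-b) θ = q' at *
    generalize Real.cos (ψ θ) = cc at *
    generalize Real.sin (ψ θ) = ss at *
    field_simp
    linear_combination (p * cc + q * ss) * hW
  -- constancy of A·exp(−P) and B·exp(−P)
  have hexp : ∀ θ, HasDerivAt (fun t => Real.exp (-P t)) (Real.exp (-P θ) * -ρ θ) θ := by
    intro θ
    exact (Real.hasDerivAt_exp (-P θ)).comp θ (hP θ).neg
  have hp0 : pf a c 0 = a := by simp [pf]
  have hq0 : pf b d 0 = b := by simp [pf]
  have hconstA : ∀ θ, A θ * Real.exp (-P θ) = r0 := by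
    have hd : ∀ θ, HasDerivAt (fun t => A t * Real.exp (-P t)) 0 θ := by
      intro θ
      have h := (hA' θ).mul (hexp θ)
      refine h.congr_deriv ?_
      ring
    have hc := is_const_of_deriv_eq_zero (fun θ => (hd θ).differentiableAt)
      (fun θ => (hd θ).deriv)
    intro θ
    have h0 : A 0 * Real.exp (-P 0) = r0 := by
      rw [hP0]
      simp only [hAdef, hψ0, neg_zero, Real.exp_zero, mul_one]
      rw [hcos0, hsin0, hp0, hq0]
      field_simp
      linear_combination (-1 : ℝ) * hr0sq
    rw [hc θ 0, h0]
  have hconstB : ∀ θ, B θ * Real.exp (-P θ) = 0 := by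
    have hd : ∀ θ, HasDerivAt (fun t => B t * Real.exp (-P t)) 0 θ := by
      intro θ
      have h := (hB' θ).mul (hexp θ)
      refine h.congr_deriv ?_
      ring
    have hc := is_const_of_deriv_eq_zero (fun θ => (hd θ).differentiableAt)
      (fun θ => (hd θ).deriv)
    intro θ
    have h0 : B 0 * Real.exp (-P 0) = 0 := by
      rw [hP0]
      simp only [hBdef, hψ0, neg_zero, Real.exp_zero, mul_one]
      rw [hcos0, hsin0, hp0, hq0]
      field_simp
      ring
    rw [hc θ 0, h0]
  have hBzero : ∀ θ, B θ = 0 := by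
    intro θ
    have h := hconstB θ
    rcases mul_eq_zero.mp h with h | h
    · exact h
    · exact absurd h (Real.exp_ne_zero _)
  have hApos : ∀ θ, 0 < A θ := by
    intro θ
    have h := hconstA θ
    nlinarith [Real.exp_pos (-P θ), hr0]
  have hAsq : ∀ θ, A θ ^ 2 = Rf a b c d θ := by
    intro θ
    have hB := hBzero θ
    have hR : Rf a b c d θ = pf a c θ ^ 2 + pf b d θ ^ 2 := rfl
    simp only [hBdef] at hB
    simp only [hAdef]
    rw [hR]
    linear_combination (pf a c θ ^ 2 + pf b d θ ^ 2) * Real.sin_sq_add_cos_sq (ψ θ)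
      - (pf a c θ * Real.sin (ψ θ) - pf b d θ * Real.cos (ψ θ)) * hB
  have hAr : ∀ θ, A θ = Real.sqrt (Rf a b c d θ) := by
    intro θ
    rw [← hAsq θ, Real.sqrt_sq (hApos θ).le]
  have hext : ∀ θ, pf a c θ = Real.sqrt (Rf a b c d θ) * Real.cos (ψ θ) ∧
      pf b d θ = Real.sqrt (Rf a b c d θ) * Real.sin (ψ θ) := by
    intro θ
    have hA := hAr θ
    have hB := hBzero θ
    simp only [hAdef] at hA
    simp only [hBdef] at hB
    constructor
    · linear_combination Real.cos (ψ θ) * hA + Real.sin (ψ θ) * hB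
        - pf a c θ * Real.sin_sq_add_cos_sq (ψ θ)
    · linear_combination Real.sin (ψ θ) * hA - Real.cos (ψ θ) * hB
        - pf b d θ * Real.sin_sq_add_cos_sq (ψ θ)
  clear_value ψ P ρ A B z θ₀ r0
  refine ⟨ψ, hψ, hext, ?_⟩
  -- endpoint computation
  have hp2 : pf a c (2 * π) = a := by simp [pf]
  have hq2 : pf b d (2 * π) = b := by simp [pf]
  have hR2 : Rf a b c d (2 * π) = a ^ 2 + b ^ 2 := by
    unfold Rf; rw [hp2, hq2]
  have hr2 : Real.sqrt (Rf a b c d (2 * π)) = r0 := by rw [hR2]; exact hr0def.symm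
  have hcos2 : Real.cos (ψ (2 * π)) = Real.cos θ₀ := by
    have h := (hext (2 * π)).1
    rw [hp2, hr2] at h
    rw [hcos0, h]
    field_simp
  have hsin2 : Real.sin (ψ (2 * π)) = Real.sin θ₀ := by
    have h := (hext (2 * π)).2
    rw [hq2, hr2] at h
    rw [hsin0, h]
    field_simp
  have hexpeq : Complex.exp (↑(ψ (2 * π)) * Complex.I) = Complex.exp (↑θ₀ * Complex.I) := by
    rw [Complex.exp_mul_I, Complex.exp_mul_I, ← Complex.ofReal_cos, ← Complex.ofReal_cos,
      ← Complex.ofReal_sin, ← Complex.ofReal_sin, hcos2, hsin2]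
  obtain ⟨n, hn⟩ := Complex.exp_eq_exp_iff_exists_int.mp hexpeq
  have hn' : ψ (2 * π) = θ₀ + n * (2 * π) := by
    have h := congrArg Complex.im hn
    simpa using h
  have hmono : StrictMono ψ := strictMono_of_deriv_pos (fun x => by
    rw [(hψ x).deriv]; exact div_pos hD (Rf_pos hDne x))
  have hlt : ψ 0 < ψ (2 * π) := hmono (by positivity)
  have hπ := Real.pi_pos
  clear hexp hconstA hconstB hBzero hApos hAsq hAr hψdef hPdef hρdef hAdef hBdef hA' hB'
    A B hP P ρ hWcont hρcont hzdef habs hz z hab hab2 hθ₀def hexpeq hcos2 hsin2 hR2 hr2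
    hp2 hq2 hp0 hq0 hn hr0sq hr0def hP0
  have hn1 : 1 ≤ n := by
    by_contra h
    push_neg at h
    have h' : (n : ℝ) ≤ 0 := by
      have : n ≤ 0 := by omega
      exact_mod_cast this
    rw [hψ0, hn'] at hlt
    nlinarith
  have hn2 : n ≤ 1 := by
    by_contra h
    push_neg at h
    have h2n : (2 : ℝ) ≤ (n : ℝ) := by exact_mod_cast h
    have hmem : θ₀ + 2 * π ∈ Set.Ioo (ψ 0) (ψ (2 * π)) := by
      rw [hψ0, hn']
      constructor
      · nlinarith
      · nlinarith
    have hψcont : ContinuousOn ψ (Set.Icc 0 (2 * π)) :=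
      (continuous_iff_continuousAt.mpr (fun x => (hψ x).continuousAt)).continuousOn
    obtain ⟨θ₁, hθ₁mem, hθ₁⟩ :=
      intermediate_value_Ioo (by positivity : (0:ℝ) ≤ 2 * π) hψcont hmem
    have hc1 : Real.cos (ψ θ₁) = Real.cos θ₀ := by rw [hθ₁, Real.cos_add_two_pi]
    have hs1 : Real.sin (ψ θ₁) = Real.sin θ₀ := by rw [hθ₁, Real.sin_add_two_pi]
    set r1 := Real.sqrt (Rf a b c d θ₁) with hr1def
    have hr1 : 0 < r1 := Real.sqrt_pos.mpr (Rf_pos hDne θ₁)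
    have hp1 : pf a c θ₁ = r1 * (a / r0) := by rw [(hext θ₁).1, hc1, hcos0]
    have hq1 : pf b d θ₁ = r1 * (b / r0) := by rw [(hext θ₁).2, hs1, hsin0]
    have hcosθ1 : Real.cos θ₁ = r1 / r0 := by
      have h1 : d * pf a c θ₁ - c * pf b d θ₁ = (a * d - b * c) * Real.cos θ₁ := by
        simp [pf]; ring
      rw [hp1, hq1] at h1
      have h2 : (a * d - b * c) * Real.cos θ₁ = (a * d - b * c) * (r1 / r0) := by
        rw [← h1]; field_simp
      exact mul_left_cancel₀ hDne h2
    have hsinθ1 : Real.sin θ₁ = 0 := by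
      have h1 : a * pf b d θ₁ - b * pf a c θ₁ = (a * d - b * c) * Real.sin θ₁ := by
        simp [pf]; ring
      rw [hp1, hq1] at h1
      have h2 : (a * d - b * c) * Real.sin θ₁ = (a * d - b * c) * 0 := by
        rw [← h1]; field_simp; ring
      exact mul_left_cancel₀ hDne h2
    obtain ⟨m, hm⟩ := Real.sin_eq_zero_iff.mp hsinθ1
    obtain ⟨hθ₁0, hθ₁2π⟩ := hθ₁mem
    have hm1 : m = 1 := by
      have h0 : (0 : ℝ) < (m : ℝ) * π := by rw [hm]; exact hθ₁0
      have h2 : (m : ℝ) * π < 2 * π := by rw [hm]; exact hθ₁2π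
      have hm0 : 0 < m := by
        by_contra hc
        push_neg at hc
        have : (m : ℝ) ≤ 0 := by exact_mod_cast hc
        nlinarith
      have hm2 : m < 2 := by
        by_contra hc
        push_neg at hc
        have : (2 : ℝ) ≤ (m : ℝ) := by exact_mod_cast hc
        nlinarith
      omega
    rw [hm1] at hm
    have hcπ : Real.cos θ₁ = -1 := by
      rw [← hm]; simp
    rw [hcosθ1] at hcπ
    have : (0:ℝ) < r1 / r0 := div_pos hr1 hr0
    linarith
  have hn11 : n = 1 := le_antisymm hn2 hn1
  rw [hψ0, hn', hn11]
  push_cast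
  ring

private lemma posdet (f : (Fin 4 → ℝ) → ℝ)
    (hf : ContinuousOn f {0}ᶜ)
    (hhom : ∀ t : ℝ, t ≠ 0 → ∀ v : Fin 4 → ℝ, f (t • v) = (t ^ 2)⁻¹ * f v)
    (u v : Fin 4 → ℝ)
    (hne : ∀ θ : ℝ, Real.cos θ • u + Real.sin θ • v ≠ 0)
    (a b c d : ℝ) (hD : 0 < a * d - b * c) :
    (∫ θ in (0:ℝ)..(2 * π), f (pf a c θ • u + pf b d θ • v))
      = (a * d - b * c)⁻¹ *
        ∫ θ in (0:ℝ)..(2 * π), f (Real.cos θ • u + Real.sin θ • v) := by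
  obtain ⟨ψ, hψ, hcs, hend⟩ := exists_psi a b c d hD
  have hDne : a * d - b * c ≠ 0 := ne_of_gt hD
  set g : ℝ → ℝ := fun θ => f (Real.cos θ • u + Real.sin θ • v) with hg
  have hgcont : Continuous g := by
    apply hf.comp_continuous (by fun_prop)
    intro θ
    simpa using hne θ
  have hgper : Function.Periodic g (2 * π) := by
    intro θ
    simp only [hg, Real.cos_add_two_pi, Real.sin_add_two_pi]
  have hpoint : ∀ θ, f (pf a c θ • u + pf b d θ • v)
      = (a * d - b * c)⁻¹ * (((a * d - b * c) / Rf a b c d θ) • g (ψ θ)) := by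
    intro θ
    obtain ⟨hc, hs⟩ := hcs θ
    have hRpos := Rf_pos hDne θ
    have hr : 0 < Real.sqrt (Rf a b c d θ) := Real.sqrt_pos.mpr hRpos
    have hv : pf a c θ • u + pf b d θ • v
        = Real.sqrt (Rf a b c d θ) • (Real.cos (ψ θ) • u + Real.sin (ψ θ) • v) := by
      rw [hc, hs, smul_add, smul_smul, smul_smul]
    rw [hv, hhom _ hr.ne', Real.sq_sqrt hRpos.le]
    have : f (Real.cos (ψ θ) • u + Real.sin (ψ θ) • v) = g (ψ θ) := rfl
    rw [this, smul_eq_mul]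
    field_simp
  rw [intervalIntegral.integral_congr (g := fun θ =>
      (a * d - b * c)⁻¹ * (((a * d - b * c) / Rf a b c d θ) • g (ψ θ)))
      (fun θ _ => hpoint θ)]
  rw [intervalIntegral.integral_const_mul]
  congr 1
  have hWcont : ContinuousOn (fun θ => (a * d - b * c) / Rf a b c d θ)
      (Set.uIcc 0 (2 * π)) :=
    (continuous_const.div (continuous_Rf a b c d)
      (fun θ => (Rf_pos hDne θ).ne')).continuousOn
  calc (∫ θ in (0:ℝ)..(2 * π), ((a * d - b * c) / Rf a b c d θ) • g (ψ θ))
      = ∫ x in (ψ 0)..(ψ (2 * π)), g x := by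
        rw [← intervalIntegral.integral_comp_smul_deriv (fun x _ => hψ x) hWcont hgcont]
        rfl
    _ = ∫ x in (ψ 0)..(ψ 0 + 2 * π), g x := by rw [hend]
    _ = ∫ x in (0:ℝ)..(2 * π), g x := by
        simpa using hgper.intervalIntegral_add_eq (ψ 0) 0


/-- if `f` is smooth away from `0` on `ℝ⁴` and homogeneous of degree `−2`,
then the circle integral `φ(u, v) = ∫₀^{2π} f(u cos θ + v sin θ) dθ` satisfies
`φ(au + bv, cu + dv) = |ad − bc|⁻¹ φ(u, v)` for every invertible real 2×2 matrix
`(a b; c d)`; hence `φ` descends, up to the density twist, to `Gr(2, ℝ⁴)`. -/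
theorem xray_transform_density
    (f : (Fin 4 → ℝ) → ℝ)
    (hf : ContDiffOn ℝ (⊤ : ℕ∞) f {0}ᶜ)
    (hhom : ∀ t : ℝ, t ≠ 0 → ∀ v : Fin 4 → ℝ, f (t • v) = (t ^ 2)⁻¹ * f v)
    (u v : Fin 4 → ℝ) (huv : LinearIndependent ℝ ![u, v])
    (a b c d : ℝ) (hdet : a * d - b * c ≠ 0) :
    (∫ θ in (0:ℝ)..(2 * π),
        f (Real.cos θ • (a • u + b • v) + Real.sin θ • (c • u + d • v)))
      = |a * d - b * c|⁻¹ *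
        ∫ θ in (0:ℝ)..(2 * π), f (Real.cos θ • u + Real.sin θ • v) := by
  have hfc : ContinuousOn f {0}ᶜ := hf.continuousOn
  have hpair := LinearIndependent.pair_iff.mp huv
  have hne : ∀ θ : ℝ, Real.cos θ • u + Real.sin θ • v ≠ 0 := by
    intro θ h
    obtain ⟨h1, h2⟩ := hpair _ _ h
    nlinarith [Real.sin_sq_add_cos_sq θ]
  have hre : ∀ θ : ℝ, Real.cos θ • (a • u + b • v) + Real.sin θ • (c • u + d • v)
      = pf a c θ • u + pf b d θ • v := by
    intro θ
    simp only [pf, add_smul]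
    module
  rw [intervalIntegral.integral_congr (g := fun θ => f (pf a c θ • u + pf b d θ • v))
      (fun θ _ => by rw [hre θ])]
  rcases lt_or_gt_of_ne hdet with hneg | hpos
  · have h2 : (0:ℝ) < a * (-d) - (-b) * c := by linarith
    have hne' : ∀ θ : ℝ, Real.cos θ • u + Real.sin θ • (-v) ≠ 0 := by
      intro θ h
      apply hne (-θ)
      simpa [Real.cos_neg, Real.sin_neg, neg_smul, smul_neg] using h
    have key := posdet f hfc hhom u (-v) hne' a (-b) c (-d) h2
    have hcongr : ∀ θ : ℝ, pf a c θ • u + pf b d θ • v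
        = pf a c θ • u + pf (-b) (-d) θ • (-v) := by
      intro θ
      simp only [pf]
      module
    rw [intervalIntegral.integral_congr
        (g := fun θ => f (pf a c θ • u + pf (-b) (-d) θ • (-v)))
        (fun θ _ => by rw [hcongr θ])]
    rw [key]
    have hgper : Function.Periodic (fun θ => f (Real.cos θ • u + Real.sin θ • v)) (2 * π) := by
      intro θ; simp only [Real.cos_add_two_pi, Real.sin_add_two_pi]
    have hflip : (∫ θ in (0:ℝ)..(2 * π), f (Real.cos θ • u + Real.sin θ • (-v)))
        = ∫ θ in (0:ℝ)..(2 * π), f (Real.cos θ • u + Real.sin θ • v) := by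
      have h1 : ∀ θ : ℝ, f (Real.cos θ • u + Real.sin θ • (-v))
          = f (Real.cos (-θ) • u + Real.sin (-θ) • v) := by
        intro θ
        simp [Real.cos_neg, Real.sin_neg, neg_smul, smul_neg]
      rw [intervalIntegral.integral_congr
          (g := fun θ => f (Real.cos (-θ) • u + Real.sin (-θ) • v)) (fun θ _ => h1 θ)]
      rw [intervalIntegral.integral_comp_neg
          (fun θ => f (Real.cos θ • u + Real.sin θ • v))]
      simpa using hgper.intervalIntegral_add_eq (-(2 * π)) 0
    rw [hflip]
    congr 1
    rw [abs_of_neg hneg]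
    ring_nf
  · rw [posdet f hfc hhom u v hne a b c d hpos, abs_of_pos hpos]
end

section
/- Let f : ℝ⁴ \ {0} → ℝ be a smooth function homogeneous of degree −2, and define φ : {(u,v) ∈ ℝ⁴ × ℝ⁴ : u, v linearly independent} → ℝ by φ(u, v) = ∫₀^{2π} f(u cos θ + v sin θ) dθ. Writing u = (u₁,u₂,u₃,u₄) and v = (v₁,v₂,v₃,v₄), φ satisfies the ultrahyperbolic system ∂²φ/∂uᵢ∂vⱼ − ∂²φ/∂uⱼ∂vᵢ = 0 for all 1 ≤ i < j ≤ 4. -/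
open Real

/-- The partial derivative of `φ : ℝ⁴ × ℝ⁴ → ℝ` in the direction of the `i`-th
coordinate of the first (`u`) variable. -/
noncomputable def du (φ : (Fin 4 → ℝ) × (Fin 4 → ℝ) → ℝ) (i : Fin 4)
    (p : (Fin 4 → ℝ) × (Fin 4 → ℝ)) : ℝ :=
  fderiv ℝ φ p (Pi.single i 1, 0)

/-- The partial derivative of `φ : ℝ⁴ × ℝ⁴ → ℝ` in the direction of the `j`-th
coordinate of the second (`v`) variable. -/
noncomputable def dv (φ : (Fin 4 → ℝ) × (Fin 4 → ℝ) → ℝ) (j : Fin 4)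
    (p : (Fin 4 → ℝ) × (Fin 4 → ℝ)) : ℝ :=
  fderiv ℝ φ p (0, Pi.single j 1)


open Real MeasureTheory Metric

noncomputable section JohnAux

/-- `cos θ • p.1 + sin θ • p.2` as a continuous linear map. -/
def AA (θ : ℝ) : (Fin 4 → ℝ) × (Fin 4 → ℝ) →L[ℝ] (Fin 4 → ℝ) :=
  Real.cos θ • ContinuousLinearMap.fst ℝ _ _ + Real.sin θ • ContinuousLinearMap.snd ℝ _ _

lemma AA_apply (θ : ℝ) (p : (Fin 4 → ℝ) × (Fin 4 → ℝ)) :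
    AA θ p = Real.cos θ • p.1 + Real.sin θ • p.2 := rfl

lemma continuous_AA : Continuous AA :=
  (Real.continuous_cos.smul continuous_const).add (Real.continuous_sin.smul continuous_const)

lemma continuous_AA2 : Continuous fun q : ℝ × ((Fin 4 → ℝ) × (Fin 4 → ℝ)) => AA q.1 q.2 :=
  (continuous_AA.comp continuous_fst).clm_apply continuous_snd

lemma norm_AA_le (θ : ℝ) : ‖AA θ‖ ≤ 2 := by
  apply ContinuousLinearMap.opNorm_le_bound _ (by norm_num)
  intro p
  rw [AA_apply]
  have h1 : ‖Real.cos θ • p.1‖ ≤ ‖p‖ := by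
    rw [norm_smul, Real.norm_eq_abs]
    calc |Real.cos θ| * ‖p.1‖ ≤ 1 * ‖p‖ :=
          mul_le_mul (Real.abs_cos_le_one θ) (norm_fst_le p) (norm_nonneg _) one_pos.le
      _ = ‖p‖ := one_mul _
  have h2 : ‖Real.sin θ • p.2‖ ≤ ‖p‖ := by
    rw [norm_smul, Real.norm_eq_abs]
    calc |Real.sin θ| * ‖p.2‖ ≤ 1 * ‖p‖ :=
          mul_le_mul (Real.abs_sin_le_one θ) (norm_snd_le p) (norm_nonneg _) one_pos.le
      _ = ‖p‖ := one_mul _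
  calc ‖Real.cos θ • p.1 + Real.sin θ • p.2‖ ≤ ‖Real.cos θ • p.1‖ + ‖Real.sin θ • p.2‖ :=
        norm_add_le _ _
    _ ≤ ‖p‖ + ‖p‖ := add_le_add h1 h2
    _ = 2 * ‖p‖ := by ring

lemma nonvanish {p : (Fin 4 → ℝ) × (Fin 4 → ℝ)} {i₀ j₀ : Fin 4}
    (hd : p.1 i₀ * p.2 j₀ - p.1 j₀ * p.2 i₀ ≠ 0) (θ : ℝ) : AA θ p ≠ 0 := by
  intro h
  have h1 : Real.cos θ * p.1 i₀ + Real.sin θ * p.2 i₀ = 0 := by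
    have := congrFun (AA_apply θ p ▸ h) i₀
    simpa using this
  have h2 : Real.cos θ * p.1 j₀ + Real.sin θ * p.2 j₀ = 0 := by
    have := congrFun (AA_apply θ p ▸ h) j₀
    simpa using this
  apply hd
  have hc : Real.cos θ * (p.1 i₀ * p.2 j₀ - p.1 j₀ * p.2 i₀) = 0 := by
    linear_combination p.2 j₀ * h1 - p.2 i₀ * h2
  have hs : Real.sin θ * (p.1 i₀ * p.2 j₀ - p.1 j₀ * p.2 i₀) = 0 := by
    linear_combination p.1 i₀ * h2 - p.1 j₀ * h1
  linear_combination Real.sin θ * hs + Real.cos θ * hc -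
    (p.1 i₀ * p.2 j₀ - p.1 j₀ * p.2 i₀) * Real.sin_sq_add_cos_sq θ

lemma exists_minor {u v : Fin 4 → ℝ} (huv : LinearIndependent ℝ ![u, v]) :
    ∃ i₀ j₀ : Fin 4, u i₀ * v j₀ - u j₀ * v i₀ ≠ 0 := by
  rw [LinearIndependent.pair_iff] at huv
  by_contra h
  push_neg at h
  have hu0 : u ≠ 0 := by
    intro h0
    have := (huv 1 0 (by simp [h0])).1
    norm_num at this
  obtain ⟨i₀, hi₀⟩ := Function.ne_iff.1 hu0
  simp only [Pi.zero_apply] at hi₀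
  have hv : (v i₀ / u i₀) • u + (-1 : ℝ) • v = 0 := by
    funext k
    have := h i₀ k
    simp only [Pi.add_apply, Pi.smul_apply, smul_eq_mul, Pi.zero_apply]
    field_simp
    linarith [this]
  have := (huv _ _ hv).2
  norm_num at this

lemma keyA (G : (Fin 4 → ℝ) → ℝ) (hG : ContDiffOn ℝ (⊤ : ℕ∞) G {0}ᶜ)
    (c : ℝ → ℝ) (hc : Continuous c) (hc1 : ∀ θ, |c θ| ≤ 1)
    (p₀ : (Fin 4 → ℝ) × (Fin 4 → ℝ)) (ε : ℝ) (hε : 0 < ε)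
    (hne : ∀ p ∈ closedBall p₀ ε, ∀ θ : ℝ, AA θ p ≠ 0) :
    IntervalIntegrable (fun θ => c θ • ((fderiv ℝ G (AA θ p₀)).comp (AA θ))) volume 0 (2*π) ∧
    HasFDerivAt (fun p => ∫ θ in (0:ℝ)..(2*π), c θ * G (AA θ p))
      (∫ θ in (0:ℝ)..(2*π), c θ • ((fderiv ℝ G (AA θ p₀)).comp (AA θ))) p₀ := by
  have hopen : IsOpen ({0}ᶜ : Set (Fin 4 → ℝ)) := isOpen_compl_singleton
  have hGc : ContinuousOn G {0}ᶜ := hG.continuousOn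
  have hG' : ContinuousOn (fderiv ℝ G) {0}ᶜ :=
    hG.continuousOn_fderiv_of_isOpen hopen (by simp)
  -- continuity in θ of the integrand and its derivative, for p in the closed ball
  have hAmem : ∀ p ∈ closedBall p₀ ε, ∀ θ : ℝ, AA θ p ∈ ({0}ᶜ : Set (Fin 4 → ℝ)) :=
    fun p hp θ => hne p hp θ
  have hApcont : ∀ p : (Fin 4 → ℝ) × (Fin 4 → ℝ), Continuous fun θ => AA θ p :=
    fun p => continuous_AA.clm_apply continuous_const
  have hcont : ∀ p ∈ closedBall p₀ ε, Continuous fun θ => c θ * G (AA θ p) := by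
    intro p hp
    exact hc.mul (hGc.comp_continuous (hApcont p) (hAmem p hp))
  have hcont' : Continuous fun θ => c θ • ((fderiv ℝ G (AA θ p₀)).comp (AA θ)) := by
    have hmem := hAmem p₀ (mem_closedBall_self hε.le)
    exact hc.smul ((hG'.comp_continuous (hApcont p₀) hmem).clm_comp continuous_AA)
  refine ⟨hcont'.intervalIntegrable _ _, ?_⟩
  -- compact set of relevant points and bound on the derivative of G
  set K : Set (Fin 4 → ℝ) :=
    (fun q : ℝ × ((Fin 4 → ℝ) × (Fin 4 → ℝ)) => AA q.1 q.2) ''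
      (Set.Icc 0 (2*π) ×ˢ closedBall p₀ ε) with hKdef
  have hKcomp : IsCompact K :=
    ((isCompact_Icc).prod (isCompact_closedBall _ _)).image continuous_AA2
  have hK0 : K ⊆ ({0}ᶜ : Set (Fin 4 → ℝ)) := by
    rintro x ⟨⟨θ, p⟩, ⟨hθ, hp⟩, rfl⟩
    exact hne p hp θ
  obtain ⟨M, hM⟩ := hKcomp.exists_bound_of_continuousOn (hG'.mono hK0)
  have hIoc : Set.uIoc (0:ℝ) (2*π) ⊆ Set.Icc 0 (2*π) := by
    rw [Set.uIoc_of_le (by positivity)]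
    exact Set.Ioc_subset_Icc_self
  apply intervalIntegral.hasFDerivAt_integral_of_dominated_of_fderiv_le
    (F' := fun p θ => c θ • ((fderiv ℝ G (AA θ p)).comp (AA θ)))
    (bound := fun _ => M * 2) (Metric.ball_mem_nhds p₀ hε)
  · filter_upwards [Metric.ball_mem_nhds p₀ hε] with p hp
    exact (hcont p (ball_subset_closedBall hp)).aestronglyMeasurable
  · exact (hcont p₀ (mem_closedBall_self hε.le)).intervalIntegrable _ _
  · exact hcont'.aestronglyMeasurable
  · refine Filter.Eventually.of_forall fun θ => fun hθ p hp => ?_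
    have hmemK : AA θ p ∈ K :=
      ⟨(θ, p), ⟨hIoc hθ, ball_subset_closedBall hp⟩, rfl⟩
    have hMθ : ‖fderiv ℝ G (AA θ p)‖ ≤ M := hM _ hmemK
    calc ‖c θ • ((fderiv ℝ G (AA θ p)).comp (AA θ))‖
        = |c θ| * ‖(fderiv ℝ G (AA θ p)).comp (AA θ)‖ := by
          rw [norm_smul (c θ) ((fderiv ℝ G (AA θ p)).comp (AA θ)), Real.norm_eq_abs]
      _ ≤ 1 * ‖(fderiv ℝ G (AA θ p)).comp (AA θ)‖ :=
          mul_le_mul_of_nonneg_right (hc1 θ) (norm_nonneg _)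
      _ = ‖(fderiv ℝ G (AA θ p)).comp (AA θ)‖ := one_mul _
      _ ≤ ‖fderiv ℝ G (AA θ p)‖ * ‖AA θ‖ := ContinuousLinearMap.opNorm_comp_le _ _
      _ ≤ M * 2 :=
          mul_le_mul hMθ (norm_AA_le θ) (norm_nonneg _)
            (le_trans (norm_nonneg _) hMθ)
  · exact intervalIntegrable_const
  · refine Filter.Eventually.of_forall fun θ => fun hθ p hp => ?_
    have hx : AA θ p ≠ 0 := hne p (ball_subset_closedBall hp) θ
    have hdG : DifferentiableAt ℝ G (AA θ p) :=
      (hG.contDiffAt (hopen.mem_nhds hx)).differentiableAt (by simp)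
    exact (hdG.hasFDerivAt.comp p (AA θ).hasFDerivAt).const_mul (c θ)

end JohnAux

open MeasureTheory Metric

/-- John's equation: for `f` smooth away from `0` and homogeneous of
degree `−2`, the X-ray transform `φ(u,v) = ∫₀^{2π} f(u cos θ + v sin θ) dθ` satisfies
the ultrahyperbolic system `∂²φ/∂uᵢ∂vⱼ − ∂²φ/∂uⱼ∂vᵢ = 0` for all `i < j`. -/
theorem john_ultrahyperbolic_system
    (f : (Fin 4 → ℝ) → ℝ)
    (hf : ContDiffOn ℝ (⊤ : ℕ∞) f {0}ᶜ)
    (hhom : ∀ t : ℝ, t ≠ 0 → ∀ v : Fin 4 → ℝ, f (t • v) = (t ^ 2)⁻¹ * f v)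
    (φ : (Fin 4 → ℝ) × (Fin 4 → ℝ) → ℝ)
    (hφ : ∀ p : (Fin 4 → ℝ) × (Fin 4 → ℝ),
      φ p = ∫ θ in (0:ℝ)..(2 * π), f (Real.cos θ • p.1 + Real.sin θ • p.2))
    (u v : Fin 4 → ℝ) (huv : LinearIndependent ℝ ![u, v])
    (i j : Fin 4) (hij : i < j) :
    dv (du φ i) j (u, v) - dv (du φ j) i (u, v) = 0 := by
  classical
  obtain ⟨i₀, j₀, hd⟩ := exists_minor huv
  set V : Set ((Fin 4 → ℝ) × (Fin 4 → ℝ)) :=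
    {p | p.1 i₀ * p.2 j₀ - p.1 j₀ * p.2 i₀ ≠ 0} with hVdef
  have hVopen : IsOpen V := by
    have hcont : Continuous fun p : (Fin 4 → ℝ) × (Fin 4 → ℝ) =>
        p.1 i₀ * p.2 j₀ - p.1 j₀ * p.2 i₀ := by fun_prop
    exact isOpen_ne.preimage hcont
  have huvV : (u, v) ∈ V := hd
  have hball : ∀ p ∈ V, ∃ ε > 0, ∀ q ∈ closedBall p ε, ∀ θ : ℝ, AA θ q ≠ 0 := by
    intro p hp
    obtain ⟨ε, hε, hsub⟩ := Metric.isOpen_iff.1 hVopen p hp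
    refine ⟨ε/2, by linarith, fun q hq θ => ?_⟩
    have hqV : q ∈ V :=
      hsub (Metric.mem_ball.2 (lt_of_le_of_lt (Metric.mem_closedBall.1 hq) (by linarith)))
    exact nonvanish hqV θ
  have hGi : ∀ k : Fin 4, ContDiffOn ℝ (⊤ : ℕ∞) (fun x => fderiv ℝ f x (Pi.single k 1)) {0}ᶜ := by
    intro k
    have h1 : ContDiffOn ℝ (⊤ : ℕ∞) (fderiv ℝ f) {0}ᶜ :=
      hf.fderiv_of_isOpen isOpen_compl_singleton (by simp)
    exact h1.clm_apply contDiffOn_const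
  -- first derivative formula on V
  have hmain : ∀ (k : Fin 4), ∀ p ∈ V,
      du φ k p = ∫ θ in (0:ℝ)..(2*π),
        Real.cos θ * (fun x => fderiv ℝ f x (Pi.single k 1)) (AA θ p) := by
    intro k p hp
    obtain ⟨ε, hε, hne⟩ := hball p hp
    have hder := keyA f hf (fun _ => 1) continuous_const (by norm_num) p ε hε hne
    have hφeq : (fun q => ∫ θ in (0:ℝ)..(2*π), (fun _ : ℝ => (1:ℝ)) θ * f (AA θ q)) = φ := by
      funext q
      rw [hφ q]
      simp only [one_mul, AA_apply]
    rw [hφeq] at hder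
    show fderiv ℝ φ p (Pi.single k 1, 0) = _
    rw [hder.2.fderiv, ContinuousLinearMap.intervalIntegral_apply hder.1 (Pi.single k 1, 0)]
    refine intervalIntegral.integral_congr fun θ _ => ?_
    simp only [ContinuousLinearMap.smul_apply, ContinuousLinearMap.coe_comp',
      Function.comp_apply, one_smul, smul_eq_mul]
    rw [show AA θ ((Pi.single k 1 : Fin 4 → ℝ), (0 : Fin 4 → ℝ))
        = Real.cos θ • (Pi.single k 1 : Fin 4 → ℝ) by simp [AA_apply],
      ContinuousLinearMap.map_smul]
    simp
  -- second derivative formula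
  have key2 : ∀ k l : Fin 4,
      dv (du φ k) l (u, v) = ∫ θ in (0:ℝ)..(2*π),
        Real.sin θ * (Real.cos θ *
          fderiv ℝ (fun x => fderiv ℝ f x (Pi.single k 1)) (AA θ (u, v)) (Pi.single l 1)) := by
    intro k l
    obtain ⟨ε, hε, hne⟩ := hball (u, v) huvV
    have hder := keyA (fun x => fderiv ℝ f x (Pi.single k 1)) (hGi k)
      Real.cos Real.continuous_cos (fun θ => Real.abs_cos_le_one θ) (u, v) ε hε hne
    have hev : du φ k =ᶠ[nhds (u, v)] fun p => ∫ θ in (0:ℝ)..(2*π),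
        Real.cos θ * (fun x => fderiv ℝ f x (Pi.single k 1)) (AA θ p) :=
      Filter.eventuallyEq_of_mem (hVopen.mem_nhds huvV) (fun p hp => hmain k p hp)
    show fderiv ℝ (du φ k) (u, v) (0, Pi.single l 1) = _
    rw [hev.fderiv_eq, hder.2.fderiv,
      ContinuousLinearMap.intervalIntegral_apply hder.1 ((0 : Fin 4 → ℝ), Pi.single l 1)]
    refine intervalIntegral.integral_congr fun θ _ => ?_
    simp only [ContinuousLinearMap.smul_apply, ContinuousLinearMap.coe_comp',
      Function.comp_apply, smul_eq_mul]
    rw [show AA θ ((0 : Fin 4 → ℝ), (Pi.single l 1 : Fin 4 → ℝ))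
        = Real.sin θ • (Pi.single l 1 : Fin 4 → ℝ) by simp [AA_apply],
      ContinuousLinearMap.map_smul]
    simp only [smul_eq_mul]
    ring
  have hx0 : ∀ θ : ℝ, AA θ (u, v) ≠ 0 := fun θ => nonvanish hd θ
  have hsymm : ∀ θ : ℝ,
      fderiv ℝ (fun x => fderiv ℝ f x (Pi.single i 1)) (AA θ (u, v)) (Pi.single j 1)
        = fderiv ℝ (fun x => fderiv ℝ f x (Pi.single j 1)) (AA θ (u, v)) (Pi.single i 1) := by
    intro θ
    have hx := hx0 θ
    have hf2 : ContDiffAt ℝ 2 f (AA θ (u, v)) :=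
      (hf.contDiffAt (isOpen_compl_singleton.mem_nhds hx)).of_le (by exact (WithTop.coe_le_coe.2 (le_top : (2 : ℕ∞) ≤ ⊤) : ((2 : ℕ∞) : WithTop ℕ∞) ≤ ((⊤ : ℕ∞) : WithTop ℕ∞)))
    have hdf : DifferentiableAt ℝ (fderiv ℝ f) (AA θ (u, v)) := by
      have h1 := hf2.fderiv_right (m := 1) (by norm_num)
      exact h1.differentiableAt one_ne_zero
    rw [fderiv_clm_apply hdf (differentiableAt_const _),
        fderiv_clm_apply hdf (differentiableAt_const _)]
    simp only [fderiv_fun_const, Pi.zero_apply, ContinuousLinearMap.comp_zero,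
      ContinuousLinearMap.add_apply, ContinuousLinearMap.zero_apply,
      ContinuousLinearMap.flip_apply, zero_add]
    exact (hf2.isSymmSndFDerivAt minSmoothness_of_isRCLikeNormedField.le) _ _
  rw [key2 i j, key2 j i, sub_eq_zero]
  refine intervalIntegral.integral_congr fun θ _ => ?_
  rw [hsymm θ]
end
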